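/- For the Lennard-Jones potential V₀(r) = r^{−12} − 2r^{−6} on the triangular lattice with nearest-neighbor interactions, the uniformly dilated lattice M(t) = tM is stable (λ_atom(M(t)) > 0, equivalently λ̃_LH(M(t)) > 0) if and only if t ∈ (0, (19/10)^{1/6}). -/

import Mathlib

open Real

noncomputable section

/-- `𝓡 = {±e₁, ±e₂, ±(e₂−e₁)}`. -/
def triR : Finset (Fin 2 → ℤ) :=
  {![1, 0], ![-1, 0], ![0, 1], ![0, -1], ![-1, 1], ![1, -1]}

/-- The lattice basis matrix `M` of the triangular lattice. -/
def triM : Matrix (Fin 2) (Fin 2) ℝ :=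
  !![1, 1/2; 0, Real.sqrt 3 / 2]

/-- `Mρ ∈ ℝ²`. -/
def triMvec (ρ : Fin 2 → ℤ) : Fin 2 → ℝ :=
  triM.mulVec (fun i => (ρ i : ℝ))

/-- `K(t)` for pair interactions, with `a = V₀'(t)/t`, `b = V₀''(t)`. -/
def triK (a b : ℝ) : Fin 2 → ↥triR → Fin 2 → ↥triR → ℝ :=
  fun j ρ l σ =>
    if ρ = σ then
      a * ((if j = l then 1 else 0) - triMvec ρ.1 j * triMvec ρ.1 l) +
        b * (triMvec ρ.1 j * triMvec ρ.1 l)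
    else 0

/-- `ρ·k`. -/
def ipk (ρ : Fin 2 → ℤ) (k : Fin 2 → ℝ) : ℝ :=
  ∑ i, (ρ i : ℝ) * k i

/-- `K[ξ⊗v, ξ⊗v]`. -/
def Qform (K : Fin 2 → ↥triR → Fin 2 → ↥triR → ℝ) (ξ : Fin 2 → ℝ)
    (v : ↥triR → ℝ) : ℝ :=
  ∑ j, ∑ l, ∑ ρ : ↥triR, ∑ σ : ↥triR, K j ρ l σ * (ξ j * v ρ) * (ξ l * v σ)

/-- The atomistic stability constant (cosine/sine representation). -/
def lamAtomCS (K : Fin 2 → ↥triR → Fin 2 → ↥triR → ℝ) : ℝ :=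
  sInf { r : ℝ | ∃ (ξ k : Fin 2 → ℝ), ξ ≠ 0 ∧ k ≠ 0 ∧
    (∀ i, k i ∈ Set.Ico 0 (2 * π)) ∧
    r = (Qform K ξ (fun ρ => Real.cos (ipk ρ.1 k) - 1) +
          Qform K ξ (fun ρ => Real.sin (ipk ρ.1 k))) /
        ((∑ i, (ξ i) ^ 2) *
          ((∑ ρ : ↥triR, (Real.cos (ipk ρ.1 k) - 1) ^ 2) +
            (∑ ρ : ↥triR, (Real.sin (ipk ρ.1 k)) ^ 2))) }

/-- The modified Legendre–Hadamard constant `λ̃_LH`. -/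
def lamTildeLH (K : Fin 2 → ↥triR → Fin 2 → ↥triR → ℝ) : ℝ :=
  sInf { r : ℝ | ∃ ξ η : Fin 2 → ℝ, ξ ≠ 0 ∧ η ≠ 0 ∧
    r = Qform K ξ (fun ρ => ipk ρ.1 η) /
        ((∑ i, (ξ i) ^ 2) * (∑ ρ : ↥triR, (ipk ρ.1 η) ^ 2)) }

/-- The Lennard-Jones potential `V₀(r) = r⁻¹² − 2r⁻⁶`. -/
def lj : ℝ → ℝ := fun r => r ^ (-12 : ℤ) - 2 * r ^ (-6 : ℤ)

/-!
Write `a = V₀'(t)/t` and `b = V₀''(t)`. A bond of direction `u` contributes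
`a |ξ|² + (b - a) (ξ · u)²`, and the bonds `±ρ` of the triangular lattice have the three unit
directions `u₁, u₂, u₃`; so both stability constants are infima of `a + (b - a) s`, where `s` is
a weighted mean of `(ξ · uᵢ)² / |ξ|²`. The weights are `|e^{i ρ·k} - 1|²`, resp. `(ρ · η)²`, and
in both cases they are the squared sides of a (possibly degenerate) triangle. For such weights
`s ∈ [1/4, 3/4]`: the quadratic form `4 ∑ wᵢ (ξ · uᵢ)² - |ξ|² ∑ wᵢ` has nonnegative trace and
determinant `48 · area²`, and `ξ ↦ ξ^⊥` exchanges `s` and `1 - s`. As `s = 3/4` is attained,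
both constants are positive when `3a + b` and `a + 3b` are, and not when `a + 3b ≤ 0`.
For Lennard-Jones, `t¹⁴ (3a + b) = 120 - 48 t⁶` and `t¹⁴ (a + 3b) = 456 - 240 t⁶`.
-/

lemma quadratic_nonneg_of_trace_nonneg_of_sq_le {p q r : ℝ} (htr : 0 ≤ p + r)
    (hdet : q ^ 2 ≤ p * r) (x y : ℝ) : 0 ≤ p * x ^ 2 + 2 * q * x * y + r * y ^ 2 := by
  have hp : 0 ≤ p := by nlinarith [sq_nonneg q]
  rcases hp.eq_or_lt with hp | hp
  · have hq : q = 0 := by subst hp; nlinarith [sq_nonneg q]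
    subst hp hq
    nlinarith [sq_nonneg y]
  · have hsq : p * (p * x ^ 2 + 2 * q * x * y + r * y ^ 2)
        = (p * x + q * y) ^ 2 + (p * r - q ^ 2) * y ^ 2 := by ring
    have : 0 ≤ p * (p * x ^ 2 + 2 * q * x * y + r * y ^ 2) := by
      rw [hsq]; nlinarith [sq_nonneg (p * x + q * y), sq_nonneg y]
    exact nonneg_of_mul_nonneg_right (by linarith) hp

/-- Heron's formula: sixteen times the squared area of a triangle with squared side lengths
`w₁ w₂ w₃`. -/
def heronForm (w₁ w₂ w₃ : ℝ) : ℝ :=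
  2 * (w₁ * w₂ + w₂ * w₃ + w₃ * w₁) - (w₁ ^ 2 + w₂ ^ 2 + w₃ ^ 2)

lemma heronForm_normSq_sub (u₁ u₂ v₁ v₂ : ℝ) :
    heronForm (u₁ ^ 2 + u₂ ^ 2) (v₁ ^ 2 + v₂ ^ 2) ((v₁ - u₁) ^ 2 + (v₂ - u₂) ^ 2)
      = 4 * (u₁ * v₂ - u₂ * v₁) ^ 2 := by
  unfold heronForm; ring

lemma heronForm_normSq_sub_nonneg (u₁ u₂ v₁ v₂ : ℝ) :
    0 ≤ heronForm (u₁ ^ 2 + u₂ ^ 2) (v₁ ^ 2 + v₂ ^ 2) ((v₁ - u₁) ^ 2 + (v₂ - u₂) ^ 2) := by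
  rw [heronForm_normSq_sub]; positivity

/-- `∑ wᵢ (ξ · uᵢ)²` for `ξ = (x, y)` and the unit bond directions `u₁ = (1, 0)`,
`u₂ = (1/2, √3/2)`, `u₃ = (-1/2, √3/2)` of the triangular lattice. -/
def bondProjSq (w₁ w₂ w₃ x y : ℝ) : ℝ :=
  w₁ * x ^ 2 + w₂ * (x / 2 + √3 / 2 * y) ^ 2 + w₃ * (-x / 2 + √3 / 2 * y) ^ 2

lemma bondProjSq_add_rotate (w₁ w₂ w₃ x y : ℝ) :
    bondProjSq w₁ w₂ w₃ x y + bondProjSq w₁ w₂ w₃ (-y) x = (x ^ 2 + y ^ 2) * (w₁ + w₂ + w₃) := by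
  unfold bondProjSq
  linear_combination (w₂ + w₃) * (x ^ 2 + y ^ 2) / 4 * Real.sq_sqrt (show (0 : ℝ) ≤ 3 by norm_num)

lemma le_four_mul_bondProjSq {w₁ w₂ w₃ : ℝ} (hw : 0 ≤ w₁ + w₂ + w₃)
    (hH : 0 ≤ heronForm w₁ w₂ w₃) (x y : ℝ) :
    (x ^ 2 + y ^ 2) * (w₁ + w₂ + w₃) ≤ 4 * bondProjSq w₁ w₂ w₃ x y := by
  have h3 := Real.sq_sqrt (show (0 : ℝ) ≤ 3 by norm_num)
  -- the Gram determinant of this quadratic form in `(x, y)` is `3 * heronForm w₁ w₂ w₃`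
  have hq := quadratic_nonneg_of_trace_nonneg_of_sq_le (p := 3 * w₁) (q := √3 * (w₂ - w₃))
    (r := -w₁ + 2 * w₂ + 2 * w₃) (by linarith)
    (by rw [mul_pow, h3]; unfold heronForm at hH; nlinarith) x y
  unfold bondProjSq
  linear_combination hq - (w₂ + w₃) * y ^ 2 * h3

lemma four_mul_bondProjSq_le {w₁ w₂ w₃ : ℝ} (hw : 0 ≤ w₁ + w₂ + w₃)
    (hH : 0 ≤ heronForm w₁ w₂ w₃) (x y : ℝ) :
    4 * bondProjSq w₁ w₂ w₃ x y ≤ 3 * ((x ^ 2 + y ^ 2) * (w₁ + w₂ + w₃)) := by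
  have := le_four_mul_bondProjSq hw hH (-y) x
  linarith [bondProjSq_add_rotate w₁ w₂ w₃ x y]

def bondQuot (a b w₁ w₂ w₃ x y : ℝ) : ℝ :=
  (a * ((x ^ 2 + y ^ 2) * (w₁ + w₂ + w₃)) + (b - a) * bondProjSq w₁ w₂ w₃ x y) /
    ((x ^ 2 + y ^ 2) * (w₁ + w₂ + w₃))

lemma min_le_bondQuot (a b : ℝ) {w₁ w₂ w₃ x y : ℝ} (hH : 0 ≤ heronForm w₁ w₂ w₃)
    (hD : 0 < (x ^ 2 + y ^ 2) * (w₁ + w₂ + w₃)) :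
    min ((3 * a + b) / 4) ((a + 3 * b) / 4) ≤ bondQuot a b w₁ w₂ w₃ x y := by
  have hw := (pos_of_mul_pos_right hD (by positivity)).le
  have hlo := le_four_mul_bondProjSq hw hH x y
  have hhi := four_mul_bondProjSq_le hw hH x y
  rw [bondQuot, le_div_iff₀ hD]
  rcases le_total a b with hab | hab
  · nlinarith [min_le_left ((3 * a + b) / 4) ((a + 3 * b) / 4),
      mul_le_mul_of_nonneg_left hlo (sub_nonneg.2 hab)]
  · nlinarith [min_le_right ((3 * a + b) / 4) ((a + 3 * b) / 4),
      mul_le_mul_of_nonneg_left hhi (sub_nonneg.2 hab)]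

lemma bondQuot_zero_self_self (a b : ℝ) {c : ℝ} (hc : c ≠ 0) :
    bondQuot a b 0 c c 0 1 = (a + 3 * b) / 4 := by
  rw [bondQuot, div_eq_iff (by simpa)]
  unfold bondProjSq
  linear_combination c * (b - a) / 2 * Real.sq_sqrt (show (0 : ℝ) ≤ 3 by norm_num)

lemma sq_add_sq_pos_of_ne_zero {ξ : Fin 2 → ℝ} (h : ξ ≠ 0) : 0 < ξ 0 ^ 2 + ξ 1 ^ 2 := by
  contrapose! h
  ext i
  fin_cases i <;> simp <;> nlinarith [sq_nonneg (ξ 0), sq_nonneg (ξ 1)]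

lemma sum_triR (f : (Fin 2 → ℤ) → ℝ) :
    ∑ ρ : ↥triR, f ρ.1 =
      f ![1, 0] + f ![-1, 0] + f ![0, 1] + f ![0, -1] + f ![-1, 1] + f ![1, -1] := by
  rw [Finset.sum_coe_sort triR f, triR, Finset.sum_insert (by decide),
    Finset.sum_insert (by decide), Finset.sum_insert (by decide),
    Finset.sum_insert (by decide), Finset.sum_insert (by decide), Finset.sum_singleton]
  ring

lemma dot_triMvec (ξ : Fin 2 → ℝ) (ρ : Fin 2 → ℤ) :
    ξ 0 * triMvec ρ 0 + ξ 1 * triMvec ρ 1 = ρ 0 * ξ 0 + ρ 1 * (ξ 0 / 2 + √3 / 2 * ξ 1) := by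
  simp only [triMvec, triM, Matrix.mulVec, dotProduct, Fin.sum_univ_two, Matrix.of_apply,
    Matrix.cons_val', Matrix.cons_val_zero, Matrix.cons_val_one, Matrix.empty_val',
    Matrix.cons_val_fin_one]
  ring

lemma Qform_triK (a b : ℝ) (ξ : Fin 2 → ℝ) (v : ↥triR → ℝ) :
    Qform (triK a b) ξ v = ∑ ρ : ↥triR, v ρ ^ 2 * (a * (ξ 0 ^ 2 + ξ 1 ^ 2) +
      (b - a) * (ρ.1 0 * ξ 0 + ρ.1 1 * (ξ 0 / 2 + √3 / 2 * ξ 1)) ^ 2) := by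
  unfold Qform triK
  simp only [ite_mul, zero_mul, Finset.sum_ite_eq, Finset.mem_univ, if_true, Fin.sum_univ_two]
  rw [← Finset.sum_add_distrib, ← Finset.sum_add_distrib, ← Finset.sum_add_distrib]
  refine Finset.sum_congr rfl fun ρ _ => ?_
  rw [← dot_triMvec]
  simp only [Fin.isValue, one_ne_zero, zero_ne_one, if_false]
  ring

lemma Qform_triK_comp (a b : ℝ) (ξ : Fin 2 → ℝ) (F : (Fin 2 → ℤ) → ℝ) :
    Qform (triK a b) ξ (fun ρ => F ρ.1) =
      a * ((ξ 0 ^ 2 + ξ 1 ^ 2) * ((F ![1, 0] ^ 2 + F ![-1, 0] ^ 2) +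
        (F ![0, 1] ^ 2 + F ![0, -1] ^ 2) + (F ![-1, 1] ^ 2 + F ![1, -1] ^ 2))) +
      (b - a) * bondProjSq (F ![1, 0] ^ 2 + F ![-1, 0] ^ 2) (F ![0, 1] ^ 2 + F ![0, -1] ^ 2)
        (F ![-1, 1] ^ 2 + F ![1, -1] ^ 2) (ξ 0) (ξ 1) := by
  rw [Qform_triK, sum_triR (fun ρ => F ρ ^ 2 *
    (a * (ξ 0 ^ 2 + ξ 1 ^ 2) + (b - a) * (ρ 0 * ξ 0 + ρ 1 * (ξ 0 / 2 + √3 / 2 * ξ 1)) ^ 2))]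
  simp only [Matrix.cons_val_zero, Matrix.cons_val_one, Matrix.cons_val_fin_one, Int.cast_one,
    Int.cast_zero, Int.cast_neg]
  unfold bondProjSq
  ring

lemma ipk_apply (ρ : Fin 2 → ℤ) (k : Fin 2 → ℝ) : ipk ρ k = ρ 0 * k 0 + ρ 1 * k 1 :=
  Fin.sum_univ_two _

/-- `|e^{iθ} - 1|²`. -/
def chordSq (θ : ℝ) : ℝ := (cos θ - 1) ^ 2 + sin θ ^ 2

lemma chordSq_sub (x y : ℝ) : chordSq (y - x) = (cos y - cos x) ^ 2 + (sin y - sin x) ^ 2 := by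
  rw [chordSq, cos_sub, sin_sub]
  linear_combination (sin y ^ 2 + cos y ^ 2 - 1) * sin_sq_add_cos_sq x

-- `chordSq` gives the squared sides of the triangle with vertices `1, e^{ix}, e^{iy}`.
lemma heronForm_chordSq_nonneg (x y : ℝ) :
    0 ≤ heronForm (chordSq x) (chordSq y) (chordSq (y - x)) := by
  rw [chordSq_sub]
  simpa only [chordSq, sub_sub_sub_cancel_right]
    using heronForm_normSq_sub_nonneg (cos x - 1) (sin x) (cos y - 1) (sin y)

lemma eq_zero_of_chordSq_eq_zero {θ : ℝ} (hθ : θ ∈ Set.Ico 0 (2 * π)) (h : chordSq θ = 0) :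
    θ = 0 := by
  have hcos : cos θ = 1 := by
    unfold chordSq at h; nlinarith [sq_nonneg (cos θ - 1), sq_nonneg (sin θ)]
  exact (cos_eq_one_iff_of_lt_of_lt (by linarith [hθ.1, pi_pos]) hθ.2).1 hcos

lemma chordSq_sum_pos {k : Fin 2 → ℝ} (hk : k ≠ 0) (hk_mem : ∀ i, k i ∈ Set.Ico 0 (2 * π)) :
    0 < chordSq (k 0) + chordSq (k 1) + chordSq (k 1 - k 0) := by
  have hnonneg (θ : ℝ) : 0 ≤ chordSq θ := by unfold chordSq; positivity
  contrapose! hk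
  have h₀ := eq_zero_of_chordSq_eq_zero (hk_mem 0)
    (by linarith [hnonneg (k 0), hnonneg (k 1), hnonneg (k 1 - k 0)])
  have h₁ := eq_zero_of_chordSq_eq_zero (hk_mem 1)
    (by linarith [hnonneg (k 0), hnonneg (k 1), hnonneg (k 1 - k 0)])
  ext i
  fin_cases i <;> assumption

lemma atom_quot_eq (a b : ℝ) (ξ k : Fin 2 → ℝ) :
    (Qform (triK a b) ξ (fun ρ => cos (ipk ρ.1 k) - 1) +
        Qform (triK a b) ξ (fun ρ => sin (ipk ρ.1 k))) /
      ((∑ i, ξ i ^ 2) *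
        ((∑ ρ : ↥triR, (cos (ipk ρ.1 k) - 1) ^ 2) + (∑ ρ : ↥triR, sin (ipk ρ.1 k) ^ 2)))
      = bondQuot a b (chordSq (k 0)) (chordSq (k 1)) (chordSq (k 1 - k 0)) (ξ 0) (ξ 1) := by
  rw [Qform_triK_comp a b ξ (fun x => cos (ipk x k) - 1),
    Qform_triK_comp a b ξ (fun x => sin (ipk x k)), Fin.sum_univ_two,
    sum_triR (fun x => (cos (ipk x k) - 1) ^ 2), sum_triR (fun x => sin (ipk x k) ^ 2), bondQuot]
  conv_rhs => rw [← mul_div_mul_left _ _ (two_ne_zero' ℝ)]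
  simp only [ipk_apply, Matrix.cons_val_zero, Matrix.cons_val_one, Matrix.cons_val_fin_one,
    Int.cast_one, Int.cast_zero, Int.cast_neg, one_mul, zero_mul, neg_mul, add_zero, zero_add]
  rw [neg_add_eq_sub, ← sub_eq_add_neg, ← neg_sub (k 1) (k 0)]
  simp only [cos_neg, sin_neg, bondProjSq, chordSq]
  congr 1 <;> ring

lemma tilde_quot_eq (a b : ℝ) (ξ η : Fin 2 → ℝ) :
    Qform (triK a b) ξ (fun ρ => ipk ρ.1 η) / ((∑ i, ξ i ^ 2) * ∑ ρ : ↥triR, ipk ρ.1 η ^ 2)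
      = bondQuot a b (η 0 ^ 2) (η 1 ^ 2) ((η 1 - η 0) ^ 2) (ξ 0) (ξ 1) := by
  rw [Qform_triK_comp a b ξ (fun x => ipk x η), Fin.sum_univ_two,
    sum_triR (fun x => ipk x η ^ 2), bondQuot]
  conv_rhs => rw [← mul_div_mul_left _ _ (two_ne_zero' ℝ)]
  simp only [ipk_apply, Matrix.cons_val_zero, Matrix.cons_val_one, Matrix.cons_val_fin_one,
    Int.cast_one, Int.cast_zero, Int.cast_neg, one_mul, zero_mul, neg_mul, add_zero, zero_add,
    bondProjSq]
  congr 1 <;> ring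

lemma sInf_pos_iff_of_forall_le_of_mem {S : Set ℝ} {m c : ℝ} (hlb : ∀ r ∈ S, m ≤ r)
    (hc : c ∈ S) (hmc : 0 < c → 0 < m) : 0 < sInf S ↔ 0 < c :=
  ⟨fun h => h.trans_le (csInf_le ⟨m, hlb⟩ hc), fun h => (hmc h).trans_le (le_csInf ⟨c, hc⟩ hlb)⟩

lemma min_quarter_pos {a b : ℝ} (hab : 0 < a + 3 * b → 0 < 3 * a + b) (h : 0 < a + 3 * b) :
    0 < min ((3 * a + b) / 4) ((a + 3 * b) / 4) :=
  lt_min (by linarith [hab h]) (by linarith)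

lemma lamAtomCS_triK_pos_iff {a b : ℝ} (hab : 0 < a + 3 * b → 0 < 3 * a + b) :
    0 < lamAtomCS (triK a b) ↔ 0 < a + 3 * b := by
  rw [lamAtomCS, sInf_pos_iff_of_forall_le_of_mem (c := (a + 3 * b) / 4) ?lower ?witness
    (fun h => min_quarter_pos hab (by linarith)), div_pos_iff_of_pos_right four_pos]
  case lower =>
    rintro r ⟨ξ, k, hξ, hk, hk_mem, rfl⟩
    rw [atom_quot_eq]
    exact min_le_bondQuot a b (heronForm_chordSq_nonneg _ _)
      (mul_pos (sq_add_sq_pos_of_ne_zero hξ) (chordSq_sum_pos hk hk_mem))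
  case witness =>
    refine ⟨![0, 1], ![0, π], by simp, by simp [pi_ne_zero], ?_, ?_⟩
    · intro i
      fin_cases i <;> simp [pi_pos, pi_pos.le]
    · rw [atom_quot_eq]
      norm_num [chordSq]
      exact (bondQuot_zero_self_self a b (four_ne_zero' ℝ)).symm

lemma lamTildeLH_triK_pos_iff {a b : ℝ} (hab : 0 < a + 3 * b → 0 < 3 * a + b) :
    0 < lamTildeLH (triK a b) ↔ 0 < a + 3 * b := by
  rw [lamTildeLH, sInf_pos_iff_of_forall_le_of_mem (c := (a + 3 * b) / 4) ?lower ?witness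
    (fun h => min_quarter_pos hab (by linarith)), div_pos_iff_of_pos_right four_pos]
  case lower =>
    rintro r ⟨ξ, η, hξ, hη, rfl⟩
    rw [tilde_quot_eq]
    have hη' := sq_add_sq_pos_of_ne_zero hη
    refine min_le_bondQuot a b ?_ (mul_pos (sq_add_sq_pos_of_ne_zero hξ) (by positivity))
    simpa using heronForm_normSq_sub_nonneg (η 0) 0 (η 1) 0
  case witness =>
    refine ⟨![0, 1], ![0, 1], by simp, by simp, ?_⟩
    rw [tilde_quot_eq]
    simpa using (bondQuot_zero_self_self a b one_ne_zero).symm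

lemma hasDerivAt_lj {t : ℝ} (ht : t ≠ 0) :
    HasDerivAt lj (-12 * t ^ (-13 : ℤ) + 12 * t ^ (-7 : ℤ)) t :=
  ((hasDerivAt_zpow (-12) t (Or.inl ht)).sub
    ((hasDerivAt_zpow (-6) t (Or.inl ht)).const_mul 2)).congr_deriv (by norm_num; ring)

lemma hasDerivAt_deriv_lj {t : ℝ} (ht : t ≠ 0) :
    HasDerivAt (deriv lj) (156 * t ^ (-14 : ℤ) - 84 * t ^ (-8 : ℤ)) t := by
  have hderiv : deriv lj =ᶠ[nhds t] fun x => -12 * x ^ (-13 : ℤ) + 12 * x ^ (-7 : ℤ) := by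
    filter_upwards [eventually_ne_nhds ht] with x hx
    exact (hasDerivAt_lj hx).deriv
  refine HasDerivAt.congr_of_eventuallyEq ?_ hderiv
  exact (((hasDerivAt_zpow (-13) t (Or.inl ht)).const_mul (-12)).add
    ((hasDerivAt_zpow (-7) t (Or.inl ht)).const_mul 12)).congr_deriv (by norm_num; ring)

lemma deriv_lj_div_self {t : ℝ} (ht : t ≠ 0) : deriv lj t / t = (12 * t ^ 6 - 12) / t ^ 14 := by
  rw [(hasDerivAt_lj ht).deriv]
  field_simp
  ring

lemma deriv_deriv_lj {t : ℝ} (ht : t ≠ 0) : deriv (deriv lj) t = (156 - 84 * t ^ 6) / t ^ 14 := by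
  rw [(hasDerivAt_deriv_lj ht).deriv]
  field_simp

lemma lj_add_three_mul_pos_iff {t : ℝ} (ht : 0 < t) :
    0 < deriv lj t / t + 3 * deriv (deriv lj) t ↔ 10 * t ^ 6 < 19 := by
  rw [deriv_lj_div_self ht.ne', deriv_deriv_lj ht.ne', ← mul_div_assoc, ← add_div,
    div_pos_iff_of_pos_right (by positivity)]
  constructor <;> intro h <;> linarith

lemma lj_three_mul_add_pos {t : ℝ} (ht : 0 < t) (h : 10 * t ^ 6 < 19) :
    0 < 3 * (deriv lj t / t) + deriv (deriv lj) t := by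
  rw [deriv_lj_div_self ht.ne', deriv_deriv_lj ht.ne', ← mul_div_assoc, ← add_div]
  exact div_pos (by linarith) (by positivity)

lemma lt_rpow_one_sixth_iff {t c : ℝ} (ht : 0 < t) (hc : 0 ≤ c) :
    t < c ^ ((1 : ℝ) / 6) ↔ t ^ 6 < c := by
  rw [one_div, lt_rpow_inv_iff_of_pos ht.le hc (by norm_num)]
  norm_cast

/-- for the Lennard-Jones potential on the triangular lattice,
the uniformly dilated lattice `M(t) = tM` is stable — `λ_atom(M(t)) > 0`,
equivalently `λ̃_LH(M(t)) > 0` — if and only if `t ∈ (0, (19/10)^{1/6})`. -/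
theorem lennardJones_triangular_stability (t : ℝ) :
    ((0 < t ∧ 0 < lamAtomCS (triK (deriv lj t / t) (deriv (deriv lj) t))) ↔
      (0 < t ∧ t < ((19 : ℝ) / 10) ^ ((1 : ℝ) / 6))) ∧
    ((0 < t ∧ 0 < lamTildeLH (triK (deriv lj t / t) (deriv (deriv lj) t))) ↔
      (0 < t ∧ t < ((19 : ℝ) / 10) ^ ((1 : ℝ) / 6))) := by
  rcases le_or_gt t 0 with ht | ht
  · simp [not_lt.2 ht]
  have hab : 0 < deriv lj t / t + 3 * deriv (deriv lj) t →
      0 < 3 * (deriv lj t / t) + deriv (deriv lj) t :=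
    fun h => lj_three_mul_add_pos ht ((lj_add_three_mul_pos_iff ht).1 h)
  have hroot : t < ((19 : ℝ) / 10) ^ ((1 : ℝ) / 6) ↔ 10 * t ^ 6 < 19 := by
    rw [lt_rpow_one_sixth_iff ht (by norm_num), lt_div_iff₀' (by norm_num)]
  simp only [ht, true_and, lamAtomCS_triK_pos_iff hab, lamTildeLH_triK_pos_iff hab,
    lj_add_three_mul_pos_iff ht, hroot, and_self]

end
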